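/- arXiv:1711.07423 — 4 statements merged into one kernel-verified Lean document; each statement's English description precedes it below -/
import Mathlib

section
/- Define the sequence P_0 = p ≤ 1/16 and P_i = ∑_{j=⌈d'/2⌉}^{d'} C(d',j) P_{i-1}^j (1-P_{i-1})^{d'-j} for i ≥ 1, where d' ≥ 8. Then for all k ≥ 1, P_k ≤ p^{(d'/4)^k}. -/
/-!
Bounding `(1 - q) ^ (d' - j) ≤ 1` and `q ^ j ≤ q ^ m` termwise, the majority map sends `q` to at
most `2 ^ d' * q ^ m` with `m = ⌈d'/2⌉ ≥ d'/2`. Writing `r = d'/4`, so that `2 ^ d' = 16 ^ r`, an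
input `q ≤ x := p ^ E` gives `16 ^ r * x ^ (2r) = (16 x) ^ r * x ^ r ≤ x ^ r = p ^ (E r)`, because
`16 x ≤ 16 p ≤ 1`. Hence the exponent is multiplied by `d'/4` at every step.
-/

open Finset

lemma sum_Icc_choose_mul_pow_mul_pow_nonneg (n m : ℕ) {q : ℝ} (hq0 : 0 ≤ q) (hq1 : q ≤ 1) :
    0 ≤ ∑ j ∈ Icc m n, (n.choose j : ℝ) * q ^ j * (1 - q) ^ (n - j) :=
  sum_nonneg fun _ _ => mul_nonneg (by positivity) (pow_nonneg (sub_nonneg.mpr hq1) _)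

lemma sum_Icc_choose_mul_pow_mul_pow_le (n m : ℕ) {q : ℝ} (hq0 : 0 ≤ q) (hq1 : q ≤ 1) :
    ∑ j ∈ Icc m n, (n.choose j : ℝ) * q ^ j * (1 - q) ^ (n - j) ≤ 2 ^ n * q ^ m := by
  have hterm : ∀ j ∈ Icc m n,
      (n.choose j : ℝ) * q ^ j * (1 - q) ^ (n - j) ≤ (n.choose j : ℝ) * q ^ m := by
    intro j hj
    calc (n.choose j : ℝ) * q ^ j * (1 - q) ^ (n - j)
        ≤ (n.choose j : ℝ) * q ^ j :=
          mul_le_of_le_one_right (by positivity) (pow_le_one₀ (sub_nonneg.mpr hq1) (by linarith))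
      _ ≤ (n.choose j : ℝ) * q ^ m :=
          mul_le_mul_of_nonneg_left (pow_le_pow_of_le_one hq0 hq1 (mem_Icc.mp hj).1)
            (by positivity)
  have hchoose : ∑ j ∈ Icc m n, (n.choose j : ℝ) ≤ 2 ^ n := by
    calc ∑ j ∈ Icc m n, (n.choose j : ℝ)
        ≤ ∑ j ∈ range (n + 1), (n.choose j : ℝ) :=
          sum_le_sum_of_subset_of_nonneg
            (fun j hj => mem_range.mpr (Nat.lt_succ_of_le (mem_Icc.mp hj).2))
            (fun _ _ _ => by positivity)
      _ = 2 ^ n := by exact_mod_cast Nat.sum_range_choose n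
  calc _ ≤ ∑ j ∈ Icc m n, (n.choose j : ℝ) * q ^ m := sum_le_sum hterm
    _ = (∑ j ∈ Icc m n, (n.choose j : ℝ)) * q ^ m := (sum_mul ..).symm
    _ ≤ 2 ^ n * q ^ m := by gcongr

lemma sixteen_rpow_div_four (d : ℕ) : (16 : ℝ) ^ ((d : ℝ) / 4) = 2 ^ d := by
  rw [show (16 : ℝ) = 2 ^ (4 : ℝ) by norm_num, ← Real.rpow_mul zero_le_two,
    mul_div_cancel₀ _ four_ne_zero, Real.rpow_natCast]

lemma two_pow_mul_pow_le_rpow_mul {d m : ℕ} (hm : d ≤ 2 * m) {p q E : ℝ}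
    (hp0 : 0 ≤ p) (hp : p ≤ 1 / 16) (hE : 1 ≤ E) (hq0 : 0 ≤ q) (hq : q ≤ p ^ E) :
    2 ^ d * q ^ m ≤ p ^ (E * (d / 4)) := by
  set r : ℝ := d / 4
  set x := p ^ E
  have hr : 0 ≤ r := by positivity
  have hx0 : 0 ≤ x := Real.rpow_nonneg hp0 E
  have hxp : x ≤ p := by
    simpa using Real.rpow_le_rpow_of_exponent_ge' hp0 (by linarith) zero_le_one hE
  have hmr : r + r ≤ m := by
    have : (d : ℝ) ≤ 2 * m := by exact_mod_cast hm
    simp only [r]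
    linarith
  calc 2 ^ d * q ^ m ≤ 16 ^ r * x ^ (r + r) := by
        rw [sixteen_rpow_div_four]
        gcongr
        calc q ^ m ≤ x ^ m := pow_le_pow_left₀ hq0 hq m
          _ = x ^ (m : ℝ) := (Real.rpow_natCast x m).symm
          _ ≤ x ^ (r + r) :=
            Real.rpow_le_rpow_of_exponent_ge' hx0 (by linarith) (by linarith) hmr
    _ = (16 * x) ^ r * x ^ r := by
        rw [Real.rpow_add_of_nonneg hx0 hr hr, Real.mul_rpow (by norm_num) hx0, mul_assoc]
    _ ≤ 1 * x ^ r := by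
        gcongr
        exact Real.rpow_le_one (by positivity) (by linarith) hr
    _ = p ^ (E * r) := by rw [one_mul, Real.rpow_mul hp0]

theorem propagation_doubly_exponential_decay (d' : ℕ) (hd' : 8 ≤ d')
    (p : ℝ) (hp0 : 0 ≤ p) (hp : p ≤ 1/16) (P : ℕ → ℝ) (hP0 : P 0 = p)
    (hPrec : ∀ i : ℕ, P (i + 1) =
      ∑ j ∈ Finset.Icc ((d' + 1) / 2) d',
        (Nat.choose d' j : ℝ) * (P i) ^ j * (1 - P i) ^ (d' - j)) :
    ∀ k : ℕ, 1 ≤ k → P k ≤ p ^ (((d' : ℝ) / 4) ^ k) := by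
  have hr : (1 : ℝ) ≤ d' / 4 := by
    rw [le_div_iff₀ four_pos, one_mul]
    exact_mod_cast (by omega : 4 ≤ d')
  have key : ∀ k, 0 ≤ P k ∧ P k ≤ p ^ (((d' : ℝ) / 4) ^ k) := by
    intro k
    induction k with
    | zero => simp [hP0, hp0]
    | succ k ih =>
      obtain ⟨hPk0, hPk⟩ := ih
      have hPk1 : P k ≤ 1 :=
        hPk.trans (Real.rpow_le_one hp0 (by linarith) (by positivity))
      rw [hPrec k, pow_succ]
      refine ⟨sum_Icc_choose_mul_pow_mul_pow_nonneg _ _ hPk0 hPk1, ?_⟩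
      exact (sum_Icc_choose_mul_pow_mul_pow_le _ _ hPk0 hPk1).trans
        (two_pow_mul_pow_le_rpow_mul (by omega) hp0 hp (one_le_pow₀ hr) hPk0 hPk)
  exact fun k _ => (key k).2
end

section
/- Let G be the cycle graph C_n with n ≥ 3, and consider the synchronous majority dynamics where each vertex adopts the majority color among its two neighbors and keeps its color in case of a tie. If the initial 2-coloring (red/blue) contains no edge with both endpoints blue and contains at least one edge with both endpoints red, then after at most ⌈n/2⌉ rounds every vertex is red. -/
/-!
Since there is no blue-blue edge, a vertex whose neighbors disagree is red, so one round of the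
dynamics turns a vertex red exactly when one of its neighbors is red. In particular no blue-blue
edge is ever created, and a run of at least two consecutive red vertices grows by one vertex at
each end in every round. Starting from the red-red edge, after `⌈n/2⌉` rounds the run covers
the whole cycle.
-/

open Set

section MajorityStep

variable {V : Type*} [AddGroup V] [One V]

def majorityStep (c : V → Bool) (i : V) : Bool :=
  if c (i - 1) = c (i + 1) then c (i - 1) else c i

def NoBlueEdge (c : V → Bool) : Prop :=
  ∀ i, ¬(c i = false ∧ c (i + 1) = false)

theorem NoBlueEdge.majorityStep_eq {c : V → Bool} (h : NoBlueEdge c) (i : V) :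
    majorityStep c i = (c (i - 1) || c (i + 1)) := by
  have hleft := h (i - 1)
  have hright := h i
  rw [sub_add_cancel] at hleft
  unfold majorityStep
  revert hleft hright
  cases c (i - 1) <;> cases c i <;> cases c (i + 1) <;> decide

theorem noBlueEdge_majorityStep {c : V → Bool} (h : NoBlueEdge c) :
    NoBlueEdge (majorityStep c) := by
  rintro i ⟨hi, hi1⟩
  rw [h.majorityStep_eq, Bool.or_eq_false_iff] at hi hi1
  rw [add_sub_cancel_right] at hi1
  exact h i ⟨hi1.1, hi.2⟩

theorem noBlueEdge_iterate_majorityStep {c : V → Bool} (h : NoBlueEdge c) (t : ℕ) :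
    NoBlueEdge (majorityStep^[t] c) := by
  induction t with
  | zero => exact h
  | succ t ih => rw [Function.iterate_succ_apply']; exact noBlueEdge_majorityStep ih

end MajorityStep

section RedRun

variable {V : Type*} [AddGroupWithOne V]

theorem NoBlueEdge.majorityStep_eq_true_of_mem_Icc {c : V → Bool} (h : NoBlueEdge c) {i : V}
    {a b : ℤ} (hab : a < b) (hred : ∀ k ∈ Icc a b, c (i + k) = true) {k : ℤ}
    (hk : k ∈ Icc (a - 1) (b + 1)) : majorityStep c (i + k) = true := by
  obtain ⟨hk₁, hk₂⟩ := hk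
  rw [h.majorityStep_eq, Bool.or_eq_true]
  by_cases hka : a ≤ k - 1
  · left
    simpa [add_sub_assoc] using hred (k - 1) ⟨hka, by omega⟩
  · right
    simpa [add_assoc] using hred (k + 1) ⟨by omega, by omega⟩

theorem NoBlueEdge.iterate_majorityStep_eq_true {c : V → Bool} (h : NoBlueEdge c) {i : V}
    (hi : c i = true) (hi1 : c (i + 1) = true) (t : ℕ) {k : ℤ}
    (hk : k ∈ Icc (-(t : ℤ)) (t + 1)) : (majorityStep^[t] c) (i + k) = true := by
  induction t generalizing k with
  | zero =>
    obtain ⟨hk₁, hk₂⟩ := hk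
    obtain rfl | rfl : k = 0 ∨ k = 1 := by omega
    · simpa using hi
    · simpa using hi1
  | succ t ih =>
    rw [Function.iterate_succ_apply']
    refine (noBlueEdge_iterate_majorityStep h t).majorityStep_eq_true_of_mem_Icc (by omega)
      (fun _ ↦ ih) ?_
    push_cast at hk ⊢
    constructor <;> linarith [hk.1, hk.2]

end RedRun

theorem ZMod.exists_natAbs_le_intCast_add_eq {n : ℕ} [NeZero n] (i j : ZMod n) :
    ∃ k : ℤ, k.natAbs ≤ n / 2 ∧ i + k = j :=
  ⟨(j - i).valMinAbs, ZMod.natAbs_valMinAbs_le _, by rw [ZMod.coe_valMinAbs, add_sub_cancel]⟩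

/-- Synchronous majority dynamics on the cycle `C_n` (vertices `ZMod n`), colors in
`Bool` with `true` = red and `false` = blue: a vertex adopts the common color of its
two neighbors if they agree, and keeps its color otherwise. If initially there is no
blue-blue edge and there is at least one red-red edge, then after `⌈n/2⌉` rounds
every vertex is red. -/
theorem cycle_majority_all_red (n : ℕ) (hn : 3 ≤ n) (g : ℕ → ZMod n → Bool)
    (hdyn : ∀ t i, g (t + 1) i = if g t (i - 1) = g t (i + 1) then g t (i - 1) else g t i)
    (hnoblue : ∀ i : ZMod n, ¬(g 0 i = false ∧ g 0 (i + 1) = false))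
    (hred : ∃ i : ZMod n, g 0 i = true ∧ g 0 (i + 1) = true) :
    ∀ i : ZMod n, g ((n + 1) / 2) i = true := by
  have : NeZero n := ⟨by omega⟩
  have hg : ∀ t, g t = majorityStep^[t] (g 0) := by
    intro t
    induction t with
    | zero => rfl
    | succ t ih => rw [Function.iterate_succ_apply', ← ih]; exact funext (hdyn t)
  obtain ⟨i, hi, hi1⟩ := hred
  intro j
  obtain ⟨k, hk, rfl⟩ := ZMod.exists_natAbs_le_intCast_add_eq i j
  rw [hg]
  refine NoBlueEdge.iterate_majorityStep_eq_true hnoblue hi hi1 _ ⟨?_, ?_⟩ <;> omega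
end

section
/- Consider majority dynamics on any graph G and a vertex v whose k-neighborhood induces a tree in which all vertices at distance less than k from v have degree d. Couple with the propagation process on this tree where leaves (distance-k vertices) get the initial colors, and an internal vertex becomes blue iff at least ⌊(d-1)/2⌋ of its children are blue. If v is red at the end of the propagation process, then v is red in generation g_k of the majority dynamics, regardless of initial colors outside N_k(v). -/
/-!
Induction on `t`: a vertex at distance `k - t` from `v` that is red in the propagation process
is red in generation `t`. Since the ball is a tree, such a vertex has at most one neighbour
that is not a child (its parent), and by induction each child blue in generation `t - 1` is
blue in the propagation process, where fewer than `⌊(d - 1)/2⌋` children are blue. So at most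
`⌊(d - 1)/2⌋ < d/2` of its `d` neighbours are blue in generation `t - 1`, and majority
dynamics turns it red.
-/

open Finset

/-- One synchronous step of majority dynamics: a vertex adopts the strictly most
frequent color among its neighbors, keeping its current color in case of a tie.
Colors are `Bool`, with `true` = blue and `false` = red. -/
def majStep {V : Type*} [Fintype V] [DecidableEq V] (G : SimpleGraph V)
    [DecidableRel G.Adj] (g : V → Bool) : V → Bool := fun v =>
  let b := ((G.neighborFinset v).filter (fun w => g w = true)).card
  let r := ((G.neighborFinset v).filter (fun w => g w = false)).card
  if r < b then true else if b < r then false else g v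

/-- The ball of radius `r` around `v`: vertices joined to `v` by a walk of length
at most `r`. -/
def gball {V : Type*} (G : SimpleGraph V) (v : V) (r : ℕ) : Set V :=
  {u | ∃ p : G.Walk v u, p.length ≤ r}

namespace SimpleGraph

variable {V : Type*} {G : SimpleGraph V}

theorem Walk.eq_of_mem_support_of_length_le_dist {u w x : V} (p : G.Walk u w)
    (hx : x ∈ p.support) (h : p.length ≤ G.dist u x) : x = w := by
  classical
  have hlen := congrArg Walk.length (p.take_spec hx)
  have := dist_le (p.takeUntil x hx)
  rw [Walk.length_append] at hlen
  exact Walk.eq_of_length_eq_zero (p := p.dropUntil x hx) (by omega)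

theorem IsAcyclic.eq_of_isPath_of_support_subset {s : Set V} (hs : (G.induce s).IsAcyclic)
    {a b : V} {p q : G.Walk a b} (hp : p.IsPath) (hq : q.IsPath)
    (hps : ∀ x ∈ p.support, x ∈ s) (hqs : ∀ x ∈ q.support, x ∈ s) : p = q := by
  have hp' : (p.induce s hps).IsPath := .of_map (f := (Embedding.induce s).toHom) (by simpa)
  have hq' : (q.induce s hqs).IsPath := .of_map (f := (Embedding.induce s).toHom) (by simpa)
  have := congrArg (fun r => r.1.map (Embedding.induce s).toHom)
    ((hs.subsingleton_path _ _).elim ⟨_, hp'⟩ ⟨_, hq'⟩)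
  simpa using this

theorem mem_gball_iff {v u : V} {k : ℕ} :
    u ∈ gball G v k ↔ G.Reachable v u ∧ G.dist v u ≤ k := by
  refine ⟨fun ⟨p, hp⟩ => ⟨⟨p⟩, (dist_le p).trans hp⟩, fun ⟨hr, hd⟩ => ?_⟩
  obtain ⟨p, hp⟩ := hr.exists_walk_length_eq_dist
  exact ⟨p, hp ▸ hd⟩

theorem mem_gball_of_mem_support {v u x : V} {k : ℕ} (p : G.Walk v u) (hp : p.length ≤ k)
    (hx : x ∈ p.support) : x ∈ gball G v k := by
  classical
  exact ⟨p.takeUntil x hx, (p.length_takeUntil_le_length hx).trans hp⟩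

variable {v : V} {k : ℕ}

theorem eq_of_adj_of_dist_le_of_isAcyclic (hac : (G.induce (gball G v k)).IsAcyclic)
    {u w₁ w₂ : V} (hu : u ∈ gball G v k) (h₁ : G.Adj u w₁) (h₂ : G.Adj u w₂)
    (hd₁ : G.dist v w₁ ≤ G.dist v u) (hd₂ : G.dist v w₂ ≤ G.dist v u) : w₁ = w₂ := by
  have hreach := (mem_gball_iff.mp hu).1
  have hdu := (mem_gball_iff.mp hu).2
  -- Each `wᵢ` is the penultimate vertex of a path from `v` to `u` inside the ball, and
  -- acyclicity of the ball makes these two paths equal.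
  have extend : ∀ w (h : G.Adj u w), G.dist v w ≤ G.dist v u → ∃ p : G.Walk v w,
      (p.concat h.symm).IsPath ∧ ∀ x ∈ (p.concat h.symm).support, x ∈ gball G v k := by
    intro w h hd
    obtain ⟨p, hp, hlen⟩ := (hreach.trans h.reachable).exists_path_of_dist
    have hup : u ∉ p.support := fun hus =>
      h.ne (p.eq_of_mem_support_of_length_le_dist hus (by omega))
    refine ⟨p, hp.concat hup h.symm, fun x hx => ?_⟩
    rw [Walk.support_concat, List.mem_append, List.mem_singleton] at hx
    rcases hx with hx | rfl
    · exact mem_gball_of_mem_support p (by omega) hx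
    · exact hu
  obtain ⟨p₁, hp₁, hs₁⟩ := extend w₁ h₁ hd₁
  obtain ⟨p₂, hp₂, hs₂⟩ := extend w₂ h₂ hd₂
  obtain ⟨hw, -⟩ := Walk.concat_inj (hac.eq_of_isPath_of_support_subset hp₁ hp₂ hs₁ hs₂)
  exact hw

variable [Fintype V] [DecidableRel G.Adj]

theorem card_filter_dist_ne_succ_le_one (hac : (G.induce (gball G v k)).IsAcyclic)
    {u : V} (hu : u ∈ gball G v k) :
    #{w ∈ G.neighborFinset u | G.dist v w ≠ G.dist v u + 1} ≤ 1 := by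
  refine card_le_one.mpr fun w₁ hw₁ w₂ hw₂ => ?_
  simp only [mem_filter, mem_neighborFinset] at hw₁ hw₂
  have hle : ∀ w, G.Adj u w → G.dist v w ≠ G.dist v u + 1 → G.dist v w ≤ G.dist v u :=
    fun w h hne => by rcases h.diff_dist_adj (u := v) with h | h | h <;> omega
  exact eq_of_adj_of_dist_le_of_isAcyclic hac hu hw₁.1 hw₂.1
    (hle _ hw₁.1 hw₁.2) (hle _ hw₂.1 hw₂.2)

end SimpleGraph

theorem majStep_eq_false_of_two_mul_card_lt {V : Type*} [Fintype V] [DecidableEq V]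
    {G : SimpleGraph V} [DecidableRel G.Adj] (g : V → Bool) {u : V}
    (h : 2 * #{w ∈ G.neighborFinset u | g w = true} < G.degree u) : majStep G g u = false := by
  have hsplit : #{w ∈ G.neighborFinset u | g w = true} + #{w ∈ G.neighborFinset u | g w = false}
      = G.degree u := by
    rw [← G.card_neighborFinset_eq_degree,
      ← card_filter_add_card_filter_not (s := G.neighborFinset u) (fun w => g w = true)]
    simp only [Bool.not_eq_true]
  simp only [majStep]
  rw [if_neg (by omega), if_pos (by omega)]

section Coupling

open SimpleGraph

variable {V : Type*} [Fintype V] [DecidableEq V] {G : SimpleGraph V} [DecidableRel G.Adj]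
  {v : V} {k d : ℕ} {g : ℕ → V → Bool} {pr : V → Bool}

theorem majority_eq_false_of_propagation_eq_false (hac : (G.induce (gball G v k)).IsAcyclic)
    (hdeg : ∀ u : V, (∃ p : G.Walk v u, p.length < k) → G.degree u = d)
    (hdyn : ∀ t, g (t + 1) = majStep G (g t))
    (hleaf : ∀ u ∈ gball G v k, G.dist v u = k → pr u = g 0 u)
    (hinternal : ∀ u ∈ gball G v k, G.dist v u < k →
      (pr u = true ↔
        (d - 1) / 2 ≤ #{w ∈ G.neighborFinset u | G.dist v w = G.dist v u + 1 ∧ pr w = true}))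
    (t : ℕ) : ∀ u ∈ gball G v k, G.dist v u + t = k → pr u = false → g t u = false := by
  induction t with
  | zero =>
    intro u hu hdist hpr
    rw [← hleaf u hu hdist, hpr]
  | succ t ih =>
    intro u hu hdist hpr
    obtain ⟨hreach, -⟩ := mem_gball_iff.mp hu
    obtain ⟨p, hp⟩ := hreach.exists_walk_length_eq_dist
    have hdegu : G.degree u = d := hdeg u ⟨p, by omega⟩
    have hchildren :
        #{w ∈ G.neighborFinset u | G.dist v w = G.dist v u + 1 ∧ pr w = true} < (d - 1) / 2 := by
      by_contra! h
      simpa [hpr] using (hinternal u hu (by omega)).mpr h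
    -- Besides the children that are blue in `pr` (induction hypothesis), only the parent
    -- can be blue at time `t`.
    have hblue : {w ∈ G.neighborFinset u | g t w = true} ⊆
        {w ∈ G.neighborFinset u | G.dist v w = G.dist v u + 1 ∧ pr w = true} ∪
        {w ∈ G.neighborFinset u | G.dist v w ≠ G.dist v u + 1} := by
      intro w hw
      simp only [mem_filter, mem_union, mem_neighborFinset] at hw ⊢
      by_cases hchild : G.dist v w = G.dist v u + 1
      · have hw_ball : w ∈ gball G v k :=
          mem_gball_iff.mpr ⟨hreach.trans hw.1.reachable, by omega⟩
        refine Or.inl ⟨hw.1, hchild, ?_⟩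
        by_contra hprw
        simpa [ih w hw_ball (by omega) (by simpa using hprw)] using hw.2
      · exact Or.inr ⟨hw.1, hchild⟩
    have := (card_le_card hblue).trans (card_union_le _ _)
    have := card_filter_dist_ne_succ_le_one hac hu
    rw [hdyn]
    exact majStep_eq_false_of_two_mul_card_lt _ (by omega)

end Coupling

/-- Coupling of majority dynamics with the bottom-up propagation process on a
tree-like `k`-neighborhood. Suppose the `k`-neighborhood of `v` induces a tree in
which every vertex at distance less than `k` from `v` has degree `d`. Let `pr` be
the propagation coloring: on the leaves (vertices at distance `k`) it agrees with
the initial generation, and an internal vertex is blue iff at least `⌊(d-1)/2⌋` of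
its children are blue. If `v` is red in the propagation process, then `v` is red
in generation `g_k` of the majority dynamics, irrespective of the initial colors
outside the `k`-neighborhood. -/
theorem propagation_dominates_majority {V : Type*} [Fintype V] [DecidableEq V]
    (G : SimpleGraph V) [DecidableRel G.Adj] (v : V) (k d : ℕ)
    (htree : (G.induce (gball G v k)).IsTree)
    (hdeg : ∀ u : V, (∃ p : G.Walk v u, p.length < k) → G.degree u = d)
    (g : ℕ → V → Bool) (hdyn : ∀ t, g (t + 1) = majStep G (g t))
    (pr : V → Bool)
    (hleaf : ∀ u ∈ gball G v k, G.dist v u = k → pr u = g 0 u)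
    (hinternal : ∀ u ∈ gball G v k, G.dist v u < k →
      (pr u = true ↔ (d - 1) / 2 ≤
        ((G.neighborFinset u).filter
          (fun w => G.dist v w = G.dist v u + 1 ∧ pr w = true)).card))
    (hred : pr v = false) :
    g k v = false :=
  majority_eq_false_of_propagation_eq_false htree.isAcyclic hdeg hdyn hleaf hinternal k v
    ⟨.nil, k.zero_le⟩ (by simp) hred
end

section
/- In a graph where each vertex of a set U of size m has its radius-k' ball pairwise disjoint from the balls of the other vertices of U, color vertices independently blue with probability 1/4. If each ball N_{k'}(u) has at most t vertices and m·(1/4)^t → ∞, then with probability tending to 1 some u ∈ U has its entire ball N_{k'}(u) colored blue; consequently, u remains blue through generation k' of majority dynamics. -/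
/-!
If all vertices within distance `k'` of `u` are blue, then by induction on `i` all vertices within
distance `k' - i` of `u` are blue in generation `i`: each of them is blue and has only blue
neighbours, so majority dynamics keeps it blue. Hence `u` is blue in generation `k'`.

The balls around the vertices of `U` are disjoint, so the events "the ball of `u` is entirely blue"
are independent, each of probability `(1/4)^|N(u)| ≥ (1/4)^t`. The probability that none occurs is
therefore `∏ (1 - (1/4)^|N(u)|) ≤ exp (-m (1/4)^t) → 0`, using `1 - x ≤ exp (-x)`.
-/

open Finset Filter

section MajorityDynamics

variable {V : Type*} (G : SimpleGraph V)

theorem mem_gball_self (v : V) (r : ℕ) : v ∈ gball G v r :=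
  ⟨.nil, Nat.zero_le r⟩

variable {G}

theorem gball_mono {v : V} {r s : ℕ} (h : r ≤ s) : gball G v r ⊆ gball G v s :=
  fun _ ⟨p, hp⟩ => ⟨p, hp.trans h⟩

theorem mem_gball_succ_of_adj {u w x : V} {r : ℕ} (hw : w ∈ gball G u r) (hwx : G.Adj w x) :
    x ∈ gball G u (r + 1) := by
  obtain ⟨p, hp⟩ := hw
  exact ⟨p.concat hwx, by rw [SimpleGraph.Walk.length_concat]; omega⟩

variable [Fintype V] [DecidableEq V] [DecidableRel G.Adj]

theorem majStep_eq_true {g : V → Bool} {v : V} (hv : g v = true)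
    (hadj : ∀ w, G.Adj v w → g w = true) : majStep G g v = true := by
  have hblue : ∀ w ∈ G.neighborFinset v, g w = true := fun w hw =>
    hadj w ((G.mem_neighborFinset v w).1 hw)
  have hred : (G.neighborFinset v).filter (fun w => g w = false) = ∅ :=
    filter_false_of_mem fun w hw => by simp [hblue w hw]
  unfold majStep
  rw [filter_true_of_mem hblue, hred, card_empty]
  dsimp only
  split_ifs <;> simp_all

theorem majStep_seq_eq_true_of_gball {g : ℕ → V → Bool}
    (hg : ∀ s, g (s + 1) = majStep G (g s)) {u : V} {i j : ℕ}
    (h0 : ∀ w ∈ gball G u (i + j), g 0 w = true) :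
    ∀ w ∈ gball G u j, g i w = true := by
  induction i generalizing j with
  | zero => simpa using h0
  | succ i ih =>
    have hprev := ih (j := j + 1) (by rwa [← add_assoc, add_right_comm])
    intro w hw
    rw [hg]
    exact majStep_eq_true (hprev w (gball_mono j.le_succ hw))
      fun x hwx => hprev x (mem_gball_succ_of_adj hw hwx)

end MajorityDynamics

section BernoulliColouring

variable {V : Type*} [Fintype V] [DecidableEq V]

def bernoulliWeight (p : ℝ) (c : V → Bool) : ℝ := ∏ v, if c v then p else 1 - p

theorem sum_prod_indicator_mul_bernoulliWeight (p : ℝ) (S : Finset V) :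
    ∑ c : V → Bool, (∏ v ∈ S, if c v then (1 : ℝ) else 0) * bernoulliWeight p c
      = p ^ #S := by
  have hfactor : ∀ c : V → Bool,
      (∏ v ∈ S, if c v then (1 : ℝ) else 0) * bernoulliWeight p c
        = ∏ v, if c v then p else if v ∈ S then 0 else 1 - p := by
    intro c
    rw [bernoulliWeight, ← Fintype.prod_ite_mem, ← prod_mul_distrib]
    refine prod_congr rfl fun v _ => ?_
    by_cases hv : v ∈ S <;> cases c v <;> simp [hv]
  simp_rw [hfactor]
  rw [← Fintype.prod_sum (fun v (b : Bool) => if b then p else if v ∈ S then 0 else 1 - p),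
    ← prod_const, ← Fintype.prod_ite_mem S]
  refine prod_congr rfl fun v _ => ?_
  by_cases hv : v ∈ S <;> simp [hv]

theorem sum_bernoulliWeight (p : ℝ) : ∑ c : V → Bool, bernoulliWeight p c = 1 := by
  simpa using sum_prod_indicator_mul_bernoulliWeight p (∅ : Finset V)

theorem sum_prod_one_sub_mul_bernoulliWeight {ι : Type*} [DecidableEq ι] (p : ℝ)
    (U : Finset ι) (B : ι → Finset V) (hB : (U : Set ι).PairwiseDisjoint B) :
    ∑ c : V → Bool,
        (∏ u ∈ U, (1 - ∏ v ∈ B u, if c v then (1 : ℝ) else 0)) * bernoulliWeight p c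
      = ∏ u ∈ U, (1 - p ^ #(B u)) := by
  -- Inclusion–exclusion over `T ⊆ U`: by disjointness, the balls of `T` are all blue exactly when
  -- their union is, which has weight `p ^ ∑ u ∈ T, #(B u)`.
  simp only [prod_sub, prod_const_one, mul_one, sum_mul]
  rw [sum_comm]
  refine sum_congr rfl fun T hT => ?_
  have hBT : (T : Set ι).PairwiseDisjoint B := hB.subset (mem_powerset.1 hT)
  simp_rw [mul_assoc, ← mul_sum, ← prod_biUnion hBT, sum_prod_indicator_mul_bernoulliWeight,
    card_biUnion hBT, prod_pow_eq_pow_sum]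

open scoped Classical in
theorem sum_indicator_exists_mul_bernoulliWeight {ι : Type*} (p : ℝ)
    (U : Finset ι) (B : ι → Finset V) (hB : (U : Set ι).PairwiseDisjoint B) :
    ∑ c : V → Bool,
        (if ∃ u ∈ U, ∀ v ∈ B u, c v = true then (1 : ℝ) else 0) * bernoulliWeight p c
      = 1 - ∏ u ∈ U, (1 - p ^ #(B u)) := by
  have hindicator : ∀ c : V → Bool,
      (if ∃ u ∈ U, ∀ v ∈ B u, c v = true then (1 : ℝ) else 0)
        = 1 - ∏ u ∈ U, (1 - ∏ v ∈ B u, if c v then (1 : ℝ) else 0) := by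
    intro c
    simp only [prod_boole]
    by_cases h : ∃ u ∈ U, ∀ v ∈ B u, c v = true
    · obtain ⟨u, hu, hblue⟩ := h
      rw [if_pos ⟨u, hu, hblue⟩, prod_eq_zero hu (by rw [if_pos hblue, sub_self]), sub_zero]
    · have hnot : ∀ u ∈ U, ¬∀ v ∈ B u, c v = true := fun u hu hall => h ⟨u, hu, hall⟩
      rw [if_neg h, prod_eq_one fun u hu => by rw [if_neg (hnot u hu), sub_zero], sub_self]
  simp_rw [hindicator, sub_mul, one_mul, sum_sub_distrib, sum_bernoulliWeight,
    sum_prod_one_sub_mul_bernoulliWeight p U B hB]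

end BernoulliColouring

theorem prod_one_sub_pow_le_exp {ι : Type*} (U : Finset ι) (k : ι → ℕ) {p : ℝ}
    (hp₀ : 0 ≤ p) (hp₁ : p ≤ 1) {t : ℕ} (hk : ∀ u ∈ U, k u ≤ t) :
    ∏ u ∈ U, (1 - p ^ k u) ≤ Real.exp (-(#U * p ^ t)) :=
  calc ∏ u ∈ U, (1 - p ^ k u)
      ≤ ∏ _u ∈ U, Real.exp (-p ^ t) := by
        refine prod_le_prod (fun u _ => sub_nonneg.2 (pow_le_one₀ hp₀ hp₁)) fun u hu => ?_
        calc 1 - p ^ k u ≤ 1 - p ^ t :=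
            sub_le_sub_left (pow_le_pow_of_le_one hp₀ hp₁ (hk u hu)) 1
          _ ≤ Real.exp (-p ^ t) := Real.one_sub_le_exp_neg _
    _ = Real.exp (-(#U * p ^ t)) := by rw [prod_const, ← Real.exp_nat_mul]; ring_nf

open scoped Classical in
/-- For each `n`, let `U` be a set of `m n` vertices whose balls of radius `k' n`
are pairwise disjoint and of size at most `t n`, and color vertices independently
blue with probability `1/4`. If `m n · (1/4)^{t n} → ∞`, then the probability that
some `u ∈ U` has its entire ball colored blue tends to `1`; moreover whenever the
whole ball of `u` is initially blue, `u` is still blue in generation `k' n` of the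
majority dynamics. -/
theorem blue_ball_survives (V : ℕ → Type) [∀ n, Fintype (V n)]
    [∀ n, DecidableEq (V n)] (G : ∀ n, SimpleGraph (V n))
    [∀ n, DecidableRel (G n).Adj] (k' m t : ℕ → ℕ) (U : ∀ n, Finset (V n))
    (hm : ∀ n, (U n).card = m n)
    (hdisj : ∀ n, ((U n : Set (V n))).Pairwise
      (fun u w => Disjoint (gball (G n) u (k' n)) (gball (G n) w (k' n))))
    (hsize : ∀ n, ∀ u ∈ U n, (gball (G n) u (k' n)).ncard ≤ t n)
    (hlim : Tendsto (fun n : ℕ => (m n : ℝ) * (1 / 4) ^ (t n)) atTop atTop) :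
    Tendsto (fun n : ℕ =>
        ∑ c : V n → Bool,
          (if ∃ u ∈ U n, ∀ w ∈ gball (G n) u (k' n), c w = true then (1 : ℝ) else 0) *
            ∏ w : V n, (if c w then (1 / 4 : ℝ) else 3 / 4))
      atTop (nhds 1) ∧
    ∀ n, ∀ g : ℕ → V n → Bool, (∀ s, g (s + 1) = majStep (G n) (g s)) →
      ∀ u ∈ U n, (∀ w ∈ gball (G n) u (k' n), g 0 w = true) → g (k' n) u = true := by
  refine ⟨?_, fun n g hg u _ h0 =>
    majStep_seq_eq_true_of_gball hg (j := 0) h0 u (mem_gball_self _ u 0)⟩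
  have hq₀ : (0 : ℝ) ≤ 1 / 4 := by norm_num
  have hq₁ : (1 / 4 : ℝ) ≤ 1 := by norm_num
  let B n u : Finset (V n) := (gball (G n) u (k' n)).toFinite.toFinset
  have hB n : ((U n : Set (V n))).PairwiseDisjoint (B n) := fun u hu w hw huw =>
    Set.Finite.disjoint_toFinset.2 (hdisj n hu hw huw)
  have hcard n : ∀ u ∈ U n, #(B n u) ≤ t n := fun u hu => by
    simpa only [B, ← Set.ncard_eq_toFinset_card] using hsize n u hu
  have hnone : Tendsto (fun n => ∏ u ∈ U n, (1 - (1 / 4 : ℝ) ^ #(B n u))) atTop (nhds 0) := by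
    refine squeeze_zero (fun n => prod_nonneg fun u _ => sub_nonneg.2 (pow_le_one₀ hq₀ hq₁))
      (fun n => ?_) (Real.tendsto_exp_atBot.comp (tendsto_neg_atTop_atBot.comp hlim))
    simpa only [hm, Function.comp_apply] using
      prod_one_sub_pow_le_exp (U n) (fun u => #(B n u)) hq₀ hq₁ (hcard n)
  have hsome := (tendsto_const_nhds (x := (1 : ℝ))).sub hnone
  rw [sub_zero] at hsome
  refine hsome.congr fun n => ?_
  rw [← sum_indicator_exists_mul_bernoulliWeight _ _ _ (hB n)]
  refine sum_congr rfl fun c _ => ?_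
  simp only [B, Set.Finite.mem_toFinset, bernoulliWeight]
  norm_num
end
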